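/- arXiv:2310.00735 — 2 statements merged into one kernel-verified Lean document; each statement's English description precedes it below -/
import Mathlib

section
/- Let q be a prime power and let θ be a multiplicative character of F_{q^2} with θ ≠ θ^q (i.e., θ^{q-1} is nontrivial). Let ψ be a nontrivial additive character of F_q and ψ₂ = ψ ∘ Tr_{F_{q^2}/F_q}. Then the Gauss sum G(θ^{q-1}, ψ₂) = Σ_{x ∈ F_{q^2}^×} θ^{q-1}(x) ψ₂(x) equals q·θ(-1). -/
/-!
Since `c ^ (q - 1) = 1` for `c ∈ Fˣ`, the character `χ = θ ^ (q - 1)` is invariant under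
`x ↦ c • x`, so the Gauss sum does not change when `ψ` is replaced by `ψ (c * ·)`.
Averaging over `c ∈ Fˣ` and using orthogonality of `ψ` turns `(q - 1) G(χ)` into `q` times
the sum of `χ` over the trace-zero elements minus `∑ χ = 0`. A nonzero `x` with
`Tr x = x + x ^ q = 0` has `x ^ (q - 1) = -1`, hence `χ x = θ (-1)`, and there are `q - 1` of
them because the trace is surjective and `[E : F] = 2`.
-/

open Finset

theorem Fintype.sum_units_eq_sum {K β : Type*} [GroupWithZero K] [Fintype K] [DecidableEq K]
    [AddCommMonoid β] {f : K → β} (hf : f 0 = 0) : ∑ u : Kˣ, f u = ∑ x, f x := by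
  refine (sum_map univ ⟨Units.val, Units.val_injective⟩ f).symm.trans ?_
  refine Finset.sum_subset (subset_univ _) fun x _ hx ↦ ?_
  obtain rfl : x = 0 := by
    by_contra h
    exact hx (mem_map.2 ⟨Units.mk0 x h, mem_univ _, rfl⟩)
  exact hf

section Averaging

variable {F V R : Type*} [Field F] [Fintype F] [DecidableEq F] [AddCommGroup V] [Module F V]
  [Fintype V] [CommRing R] [IsDomain R]

theorem card_sub_one_mul_sum_mul_addChar_eq {f : V → R}
    (hf : ∀ (c : F) (v : V), c ≠ 0 → f (c • v) = f v) (L : V →ₗ[F] F) {ψ : AddChar F R}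
    (hψ : ψ ≠ 1) :
    ((Fintype.card F : R) - 1) * ∑ v, f v * ψ (L v)
      = Fintype.card F * ∑ v with L v = 0, f v - ∑ v, f v := by
  set S := ∑ v, f v * ψ (L v)
  have hdilate : ∀ c : F, c ≠ 0 → ∑ v, f v * ψ (c * L v) = S := fun c hc ↦
    Fintype.sum_equiv (LinearEquiv.smulOfNeZero F V c hc).toEquiv _ _ fun v ↦ by
      simp [hf c v hc]
  have hcols : ∑ c, ∑ v, f v * ψ (c * L v) = ∑ v, f v + (Fintype.card F - 1) * S := by
    rw [← add_sum_erase _ _ (mem_univ 0),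
      sum_congr rfl fun c hc ↦ hdilate c (ne_of_mem_erase hc), sum_const,
      card_erase_of_mem (mem_univ 0), card_univ, nsmul_eq_mul,
      Nat.cast_sub Fintype.card_pos, Nat.cast_one]
    simp
  have hrows : ∑ c, ∑ v, f v * ψ (c * L v) = Fintype.card F * ∑ v with L v = 0, f v := by
    rw [sum_comm, sum_filter, mul_sum]
    refine sum_congr rfl fun v _ ↦ ?_
    rw [← mul_sum, AddChar.sum_mulShift _ (AddChar.IsPrimitive.of_ne_one hψ)]
    split_ifs <;> ring
  linear_combination hrows - hcols

end Averaging

theorem MulChar.pow_card_sub_one_map_smul {F E R : Type*} [Field F] [Fintype F] [CommRing E]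
    [Algebra F E] [CommRing R] (θ : MulChar E R) {c : F} (hc : c ≠ 0) (x : E) :
    (θ ^ (Fintype.card F - 1)) (c • x) = (θ ^ (Fintype.card F - 1)) x := by
  rw [Algebra.smul_def, map_mul, MulChar.pow_apply' θ (Nat.sub_ne_zero_of_lt Fintype.one_lt_card),
    ← map_pow, ← map_pow, FiniteField.pow_card_sub_one_eq_one c hc, map_one, map_one, one_mul]

section QuadraticExtension

variable {F E : Type*} [Field F] [Fintype F] [Field E] [Fintype E] [Algebra F E]

theorem algebraMap_trace_eq_add_pow_card (h2 : Module.finrank F E = 2) (x : E) :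
    algebraMap F E (Algebra.trace F E x) = x + x ^ Fintype.card F := by
  simp [FiniteField.algebraMap_trace_eq_sum_pow, h2, sum_range_succ, Nat.card_eq_fintype_card]

theorem pow_card_sub_one_eq_neg_one_of_trace_eq_zero (h2 : Module.finrank F E = 2) {x : E}
    (hx : x ≠ 0) (htr : Algebra.trace F E x = 0) : x ^ (Fintype.card F - 1) = -1 := by
  have hconj : x + x ^ Fintype.card F = 0 := by
    rw [← algebraMap_trace_eq_add_pow_card h2, htr, map_zero]
  have hfrob : x * x ^ (Fintype.card F - 1) = x * -1 := by
    rw [← pow_succ', Nat.sub_add_cancel Fintype.card_pos]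
    linear_combination hconj
  exact mul_left_cancel₀ hx hfrob

theorem natCard_ker_trace (h2 : Module.finrank F E = 2) :
    Nat.card (LinearMap.ker (Algebra.trace F E)) = Fintype.card F := by
  have hrank := LinearMap.finrank_range_add_finrank_ker (Algebra.trace F E)
  rw [LinearMap.range_eq_top.2 (Algebra.trace_surjective F E), finrank_top,
    Module.finrank_self, h2] at hrank
  rw [Module.natCard_eq_pow_finrank (K := F), Nat.card_eq_fintype_card,
    show Module.finrank F (LinearMap.ker (Algebra.trace F E)) = 1 by omega, pow_one]

theorem MulChar.sum_ker_trace_pow_card_sub_one {R : Type*} [CommRing R] [Nontrivial R]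
    [DecidableEq F] (h2 : Module.finrank F E = 2) (θ : MulChar E R) :
    ∑ x with Algebra.trace F E x = 0, (θ ^ (Fintype.card F - 1)) x
      = ((Fintype.card F : R) - 1) * θ (-1) := by
  classical
  have h0 : (0 : E) ∈ univ.filter fun x ↦ Algebra.trace F E x = 0 := by simp
  have hcard : #{x | Algebra.trace F E x = 0} = Fintype.card F := by
    rw [← natCard_ker_trace h2, ← Fintype.card_subtype]
    simp
  have hconst : ∀ x ∈ (univ.filter fun x ↦ Algebra.trace F E x = 0).erase 0,
      (θ ^ (Fintype.card F - 1)) x = θ (-1) := fun x hx ↦ by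
    obtain ⟨hx0, hx⟩ := mem_erase.1 hx
    rw [MulChar.pow_apply' θ (Nat.sub_ne_zero_of_lt Fintype.one_lt_card), ← map_pow,
      pow_card_sub_one_eq_neg_one_of_trace_eq_zero h2 hx0 (mem_filter.1 hx).2]
  rw [← add_sum_erase _ _ h0, sum_congr rfl hconst, MulChar.map_zero, zero_add, sum_const,
    card_erase_of_mem h0, hcard, nsmul_eq_mul, Nat.cast_sub Fintype.card_pos, Nat.cast_one]

end QuadraticExtension

theorem stmt_0_general (F E : Type*) [Field F] [Fintype F] [Field E] [Fintype E] [DecidableEq E]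
    [Algebra F E] (h2 : Module.finrank F E = 2)
    (θ : MulChar E ℂ)
    (hθ : ∃ x : Eˣ, θ (x : E) ^ (Fintype.card F - 1) ≠ 1)
    (ψ : AddChar F ℂ) (hψ : ψ ≠ 1) :
    ∑ x : Eˣ, θ (x : E) ^ (Fintype.card F - 1) * ψ (Algebra.trace F E (x : E))
      = (Fintype.card F : ℂ) * θ (-1) := by
  classical
  set q := Fintype.card F
  set χ := θ ^ (q - 1)
  have hχ : χ ≠ 1 := by
    obtain ⟨x, hx⟩ := hθ
    exact MulChar.ne_one_iff.2 ⟨x, by rwa [MulChar.pow_apply_coe]⟩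
  have hq : (q : ℂ) - 1 ≠ 0 := sub_ne_zero.2 (mod_cast Fintype.one_lt_card.ne')
  have havg := card_sub_one_mul_sum_mul_addChar_eq
    (fun c x hc ↦ θ.pow_card_sub_one_map_smul hc x) (Algebra.trace F E) hψ
  rw [θ.sum_ker_trace_pow_card_sub_one h2, MulChar.sum_eq_zero_of_ne_one hχ, sub_zero] at havg
  simp_rw [← MulChar.pow_apply_coe]
  rw [Fintype.sum_units_eq_sum (f := fun x ↦ χ x * ψ (Algebra.trace F E x))
    (by rw [MulChar.map_zero, zero_mul])]
  exact mul_left_cancel₀ hq (havg.trans (by ring))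

/-- Gauss sum of `θ^{q-1}` over `F_{q^2}` against `ψ ∘ Tr` equals `q·θ(-1)`. -/
theorem stmt_0 (F E : Type*) [Field F] [Fintype F] [Field E] [Fintype E] [DecidableEq E]
    [Algebra F E] (h2 : Module.finrank F E = 2)
    (hodd : Odd (Fintype.card F))
    (θ : MulChar E ℂ)
    (hθ : ∃ x : Eˣ, θ (x : E) ^ (Fintype.card F - 1) ≠ 1)
    (ψ : AddChar F ℂ) (hψ : ψ ≠ 1) :
    ∑ x : Eˣ, θ (x : E) ^ (Fintype.card F - 1) * ψ (Algebra.trace F E (x : E))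
      = (Fintype.card F : ℂ) * θ (-1) :=
  stmt_0_general F E h2 θ hθ ψ hψ
end

section
/- Let q be an odd prime power, ψ a nontrivial additive character of F_q, and η a multiplicative character of F_{q^2} that is trivial on F_q^× but nontrivial on F_{q^2}^×. Then Σ_{x ∈ F_{q^2}^×} η(x) ψ(Tr_{F_{q^2}/F_q}(x)) = q · Σ_{x ∈ F_{q^2}^×, Tr(x)=0} η(x) / (q-1), i.e., the Gauss sum equals q·η(x₀) where x₀ is any element of trace zero. -/
/-!
Put `S = ∑ₓ η(x) ψ(Tr x)`. Since `η` is trivial on `F^×` and `Tr` is `F`-linear, substituting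
`x ↦ a x` shows `S = ∑ₓ η(x) ψ(a Tr x)` for every `a ∈ F^×`, while for `a = 0` that sum is
`∑ₓ η(x) = 0`.
Summing over all `a ∈ F` and using orthogonality of `ψ` gives `(q - 1) S = q ∑_{Tr x = 0} η(x)`.
The kernel of the trace is the line `F x₀`, on which `η` is constant, so the right side is
`q (q - 1) η(x₀)`.
-/

open Finset

theorem Fintype.sum_eq_card_sub_one_mul {α R : Type*} [Fintype α] [DecidableEq α] [Zero α]
    [Ring R] {f : α → R} {c : R} (h0 : f 0 = 0) (h : ∀ a, a ≠ 0 → f a = c) :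
    ∑ a, f a = ((Fintype.card α : R) - 1) * c := by
  rw [← add_sum_erase univ f (mem_univ 0), h0, zero_add,
    Finset.sum_congr rfl fun a ha => h a (ne_of_mem_erase ha), sum_const,
    card_erase_of_mem (mem_univ 0), Finset.card_univ, nsmul_eq_mul, Nat.cast_pred Fintype.card_pos]

theorem MulChar.sum_units_mul {R R' : Type*} [CommMonoidWithZero R] [Fintype R] [DecidableEq R]
    [CommSemiring R'] (χ : MulChar R R') (g : R → R') :
    ∑ u : Rˣ, χ u * g u = ∑ a, χ a * g a := by
  refine (sum_map univ ⟨Units.val, Units.val_injective⟩ fun a => χ a * g a).symm.trans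
    (sum_subset (subset_univ _) fun a _ ha => ?_)
  rw [χ.map_nonunit fun hu => ha (mem_map.mpr ⟨hu.unit, mem_univ _, hu.unit_spec⟩), zero_mul]

theorem sum_mulChar_mul_addChar_mul_trace {F E R : Type*} [CommRing F] [CommRing E] [Fintype E]
    [Algebra F E] [CommRing R] [Nontrivial R] (η : MulChar E R) (ψ : AddChar F R) {a : F}
    (ha : η (algebraMap F E a) = 1) :
    ∑ x : E, η x * ψ (a * Algebra.trace F E x) = ∑ x : E, η x * ψ (Algebra.trace F E x) := by
  have hunit : IsUnit (algebraMap F E a) := by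
    by_contra h
    exact zero_ne_one (η.map_nonunit h ▸ ha)
  refine Fintype.sum_bijective _ hunit.unit.mulLeft_bijective _ _ fun x => ?_
  have htrace : Algebra.trace F E (algebraMap F E a * x) = a * Algebra.trace F E x := by
    rw [← Algebra.smul_def, map_smul, smul_eq_mul]
  rw [IsUnit.unit_spec, htrace, map_mul η, ha, one_mul]

theorem LinearMap.ker_eq_span_singleton_of_finrank_eq_two {K V : Type*} [Field K] [AddCommGroup V]
    [Module K V] {f : V →ₗ[K] K} (hf : Function.Surjective f) (h2 : Module.finrank K V = 2)
    {v : V} (hv : v ≠ 0) (hfv : f v = 0) : LinearMap.ker f = K ∙ v := by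
  have : FiniteDimensional K V := Module.finite_of_finrank_eq_succ h2
  refine (Submodule.eq_of_le_of_finrank_eq
    ((Submodule.span_singleton_le_iff_mem _ _).mpr hfv) ?_).symm
  have := LinearMap.finrank_range_add_finrank_ker f
  rw [LinearMap.range_eq_top.mpr hf, finrank_top, Module.finrank_self, h2] at this
  rw [finrank_span_singleton hv]
  omega

theorem card_sub_one_mul_sum_mulChar_mul_addChar_trace {F E R : Type*} [CommRing F] [Fintype F]
    [DecidableEq F] [CommRing E] [Fintype E] [Algebra F E] [CommRing R] [IsDomain R]
    {η : MulChar E R} {ψ : AddChar F R} (hψ : ψ.IsPrimitive) (hη : η ≠ 1)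
    (htriv : ∀ a : F, a ≠ 0 → η (algebraMap F E a) = 1) :
    ((Fintype.card F : R) - 1) * ∑ x : E, η x * ψ (Algebra.trace F E x) =
      Fintype.card F * ∑ x ∈ univ.filter (fun x => Algebra.trace F E x = 0), η x := by
  calc ((Fintype.card F : R) - 1) * ∑ x : E, η x * ψ (Algebra.trace F E x)
      = ∑ a : F, ∑ x : E, η x * ψ (a * Algebra.trace F E x) :=
        (Fintype.sum_eq_card_sub_one_mul (by simp [MulChar.sum_eq_zero_of_ne_one hη])
          fun a ha => sum_mulChar_mul_addChar_mul_trace η ψ (htriv a ha)).symm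
    _ = ∑ x : E, η x * ∑ a : F, ψ (a * Algebra.trace F E x) := by
        rw [sum_comm]; simp_rw [mul_sum]
    _ = ∑ x : E, η x * if Algebra.trace F E x = 0 then (Fintype.card F : R) else 0 := by
        simp_rw [AddChar.sum_mulShift _ hψ, Nat.cast_ite, Nat.cast_zero]
    _ = Fintype.card F * ∑ x ∈ univ.filter (fun x => Algebra.trace F E x = 0), η x := by
        rw [sum_filter, mul_sum]
        refine Finset.sum_congr rfl fun x _ => ?_
        split_ifs <;> simp [mul_comm]

theorem sum_mulChar_of_trace_eq_zero {F E R : Type*} [Field F] [Fintype F] [DecidableEq F]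
    [Field E] [Fintype E] [Algebra F E] [CommRing R] [Nontrivial R] (η : MulChar E R)
    (htriv : ∀ a : F, a ≠ 0 → η (algebraMap F E a) = 1) (h2 : Module.finrank F E = 2)
    {x₀ : E} (hx₀ : x₀ ≠ 0) (ht : Algebra.trace F E x₀ = 0) :
    ∑ x ∈ univ.filter (fun x => Algebra.trace F E x = 0), η x =
      ((Fintype.card F : R) - 1) * η x₀ := by
  have hker := LinearMap.ker_eq_span_singleton_of_finrank_eq_two
    (Algebra.trace_surjective F E) h2 hx₀ ht
  have hfilter : univ.filter (fun x => Algebra.trace F E x = 0) =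
      univ.map ⟨(· • x₀), smul_left_injective F hx₀⟩ := by
    ext x
    simp [← LinearMap.mem_ker, hker, Submodule.mem_span_singleton]
  rw [hfilter, sum_map]
  exact Fintype.sum_eq_card_sub_one_mul (by simp [η.map_zero]) fun a ha => by
    simp [Algebra.smul_def, htriv a ha]

theorem stmt_4_general (F E : Type*) [Field F] [Fintype F] [Field E] [Fintype E] [DecidableEq E]
    [Algebra F E] (h2 : Module.finrank F E = 2)
    (ψ : AddChar F ℂ) (hψ : ψ ≠ 1)
    (η : MulChar E ℂ)
    (htriv : ∀ a : F, a ≠ 0 → η (algebraMap F E a) = 1)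
    (hnontriv : ∃ x : Eˣ, η (x : E) ≠ 1)
    (x₀ : E) (hx₀ : x₀ ≠ 0) (ht : Algebra.trace F E x₀ = 0) :
    ∑ x : Eˣ, η (x : E) * ψ (Algebra.trace F E (x : E))
      = (Fintype.card F : ℂ) * η x₀ := by
  classical
  have hq : (Fintype.card F : ℂ) - 1 ≠ 0 :=
    sub_ne_zero.mpr (by exact_mod_cast (Fintype.one_lt_card (α := F)).ne')
  apply mul_left_cancel₀ hq
  rw [η.sum_units_mul fun x => ψ (Algebra.trace F E x),
    card_sub_one_mul_sum_mulChar_mul_addChar_trace (AddChar.IsPrimitive.of_ne_one hψ)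
      (MulChar.ne_one_iff.mpr hnontriv) htriv,
    sum_mulChar_of_trace_eq_zero η htriv h2 hx₀ ht]
  ring

/-- If `η` is trivial on `F_q^×` but nontrivial on `F_{q^2}^×`, the Gauss sum
`Σ η(x) ψ(Tr x)` equals `q · η(x₀)` for any trace-zero `x₀ ≠ 0`. -/
theorem stmt_4 (F E : Type*) [Field F] [Fintype F] [Field E] [Fintype E] [DecidableEq E]
    [Algebra F E] (h2 : Module.finrank F E = 2)
    (hodd : Odd (Fintype.card F))
    (ψ : AddChar F ℂ) (hψ : ψ ≠ 1)
    (η : MulChar E ℂ)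
    (htriv : ∀ a : F, a ≠ 0 → η (algebraMap F E a) = 1)
    (hnontriv : ∃ x : Eˣ, η (x : E) ≠ 1)
    (x₀ : E) (hx₀ : x₀ ≠ 0) (ht : Algebra.trace F E x₀ = 0) :
    ∑ x : Eˣ, η (x : E) * ψ (Algebra.trace F E (x : E))
      = (Fintype.card F : ℂ) * η x₀ :=
  stmt_4_general F E h2 ψ hψ η htriv hnontriv x₀ hx₀ ht
end
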